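/- Every deterministic 1-speed online algorithm for broadcast scheduling of n unit-sized pages to minimize maximum delay factor has competitive ratio Ω(n): there is an adaptive adversary request sequence on which the optimal offline delay factor is O(1) while the online algorithm's delay factor is Ω(n). -/
import Mathlib


/-- A broadcast request for a unit-sized page: page index, arrival time, deadline
(integer time slots). -/
structure BReq where
  page : ℕ
  a : ℕ
  d : ℕ
deriving DecidableEq

/-- A 1-speed broadcast schedule transmits one unit-sized page per time slot:
`sched t` is the page transmitted during slot `[t, t+1)`.  A request is
satisfied by the first transmission of its page at or after its arrival. -/
def BSatisfied (sched : ℕ → ℕ) (r : BReq) : Prop :=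
  ∃ s : ℕ, r.a ≤ s ∧ sched s = r.page

/-- Delay factor of request `r` under `sched`: the first slot `s ≥ r.a` with
`sched s = r.page` completes at time `s + 1`, giving `(s + 1 − a)/(d − a)`. -/
noncomputable def bDelay (sched : ℕ → ℕ) (r : BReq) : ℝ :=
  (((sInf {s : ℕ | r.a ≤ s ∧ sched s = r.page} : ℕ) : ℝ) + 1 - (r.a : ℝ)) /
    ((r.d : ℝ) - (r.a : ℝ))

/-- An online broadcast algorithm: the page transmitted in slot `t` depends only
on the requests that have arrived by time `t`. -/
def BOnline (B : List BReq → ℕ → ℕ) : Prop :=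
  ∀ (σ σ' : List BReq) (t : ℕ),
    σ.filter (fun r => decide (r.a ≤ t)) = σ'.filter (fun r => decide (r.a ≤ t)) →
    B σ t = B σ' t

/-! ### Auxiliary definitions for the adversary construction -/

def pad (m x : ℕ) : ℕ := if x < 2*m then x else 0

def mkσ (m : ℕ) (gg : ℕ → ℕ) : List BReq :=
  ((List.range (2*m)).map fun p => ⟨p, 0, 2*m⟩)
  ++ ((List.range m).map fun s => ⟨pad m (gg s), s+1, 2*m⟩)
  ++ ((List.range (2*m*m)).map fun i => ⟨2*m + i % (2*m), 2*m+1+i, 2*m+2+i⟩)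

def gB (B : List BReq → ℕ → ℕ) (m : ℕ) : ℕ → ℕ
  | t => B (mkσ m (fun s => if _h : s < t then gB B m s else 0)) t
  termination_by t => t

lemma filter_rereq (m t : ℕ) (g₁ g₂ : ℕ → ℕ) (h : ∀ s < t, g₁ s = g₂ s) (l : List ℕ) :
    ((l.map fun s => (⟨pad m (g₁ s), s+1, 2*m⟩ : BReq)).filter (fun r => decide (r.a ≤ t)))
    = ((l.map fun s => (⟨pad m (g₂ s), s+1, 2*m⟩ : BReq)).filter (fun r => decide (r.a ≤ t))) := by
  induction l with
  | nil => rfl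
  | cons a l ih =>
    simp only [List.map_cons, List.filter_cons]
    by_cases hat : a + 1 ≤ t
    · have : g₁ a = g₂ a := h a (by omega)
      simp [hat, this, ih]
    · simp [hat, ih]

lemma filter_mkσ (m t : ℕ) (g₁ g₂ : ℕ → ℕ) (h : ∀ s < t, g₁ s = g₂ s) :
    (mkσ m g₁).filter (fun r => decide (r.a ≤ t))
      = (mkσ m g₂).filter (fun r => decide (r.a ≤ t)) := by
  unfold mkσ
  simp only [List.filter_append]
  rw [filter_rereq m t g₁ g₂ h]

lemma gB_eq (B : List BReq → ℕ → ℕ) (hB : BOnline B) (m : ℕ) (t : ℕ) :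
    B (mkσ m (gB B m)) t = gB B m t := by
  conv_rhs => rw [gB]
  exact hB _ _ t (filter_mkσ m t _ _ (fun s hs => by simp [hs]))

lemma mem_mkσ_elim (m : ℕ) (gg : ℕ → ℕ) (r : BReq) (hr : r ∈ mkσ m gg) :
    (∃ p, p < 2*m ∧ r = ⟨p, 0, 2*m⟩) ∨ (∃ s, s < m ∧ r = ⟨pad m (gg s), s+1, 2*m⟩) ∨
    (∃ i, i < 2*m*m ∧ r = ⟨2*m + i % (2*m), 2*m+1+i, 2*m+2+i⟩) := by
  unfold mkσ at hr
  simp only [List.mem_append, List.mem_map, List.mem_range] at hr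
  rcases hr with (⟨p, hp, rfl⟩ | ⟨s, hs, rfl⟩) | ⟨i, hi, rfl⟩
  · exact Or.inl ⟨p, hp, rfl⟩
  · exact Or.inr (Or.inl ⟨s, hs, rfl⟩)
  · exact Or.inr (Or.inr ⟨i, hi, rfl⟩)

lemma mem_orig (m : ℕ) (gg : ℕ → ℕ) (p : ℕ) (hp : p < 2*m) :
    (⟨p, 0, 2*m⟩ : BReq) ∈ mkσ m gg := by
  unfold mkσ; simp only [List.mem_append, List.mem_map, List.mem_range]
  exact Or.inl (Or.inl ⟨p, hp, rfl⟩)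

lemma mem_rereq (m : ℕ) (gg : ℕ → ℕ) (s : ℕ) (hs : s < m) :
    (⟨pad m (gg s), s+1, 2*m⟩ : BReq) ∈ mkσ m gg := by
  unfold mkσ; simp only [List.mem_append, List.mem_map, List.mem_range]
  exact Or.inl (Or.inr ⟨s, hs, rfl⟩)

lemma mem_tight (m : ℕ) (gg : ℕ → ℕ) (i : ℕ) (hi : i < 2*m*m) :
    (⟨2*m + i % (2*m), 2*m+1+i, 2*m+2+i⟩ : BReq) ∈ mkσ m gg := by
  unfold mkσ; simp only [List.mem_append, List.mem_map, List.mem_range]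
  exact Or.inr ⟨i, hi, rfl⟩

lemma bDelay_le_two (sched : ℕ → ℕ) (r : BReq) (had : r.a < r.d) (s₀ : ℕ)
    (h1 : r.a ≤ s₀) (h2 : sched s₀ = r.page) (h3 : s₀ + 1 ≤ r.a + 2*(r.d - r.a)) :
    BSatisfied sched r ∧ bDelay sched r ≤ 2 := by
  refine ⟨⟨s₀, h1, h2⟩, ?_⟩
  have hle : sInf {s : ℕ | r.a ≤ s ∧ sched s = r.page} ≤ s₀ := Nat.sInf_le ⟨h1, h2⟩
  have hd : (0:ℝ) < (r.d : ℝ) - (r.a : ℝ) := by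
    have : (r.a : ℝ) < (r.d : ℝ) := by exact_mod_cast had
    linarith
  rw [bDelay, div_le_iff₀ hd]
  have h3' : ((s₀ : ℝ) + 1) ≤ (r.a : ℝ) + 2*((r.d : ℝ) - (r.a : ℝ)) := by
    have h := (Nat.cast_le (α := ℝ)).mpr h3
    push_cast [Nat.cast_sub had.le] at h
    linarith
  have hle' : ((sInf {s : ℕ | r.a ≤ s ∧ sched s = r.page} : ℕ) : ℝ) ≤ (s₀ : ℝ) := by
    exact_mod_cast hle
  linarith

lemma bDelay_first_facts (sched : ℕ → ℕ) (r : BReq) (hs : BSatisfied sched r) :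
    r.a ≤ sInf {s : ℕ | r.a ≤ s ∧ sched s = r.page} ∧
    sched (sInf {s : ℕ | r.a ≤ s ∧ sched s = r.page}) = r.page :=
  Nat.sInf_mem (s := {s : ℕ | r.a ≤ s ∧ sched s = r.page}) hs

lemma bDelay_lt_nat (sched : ℕ → ℕ) (r : BReq) (c : ℕ) (had : r.a < r.d)
    (hd : bDelay sched r < (c : ℝ)) :
    sInf {s : ℕ | r.a ≤ s ∧ sched s = r.page} + 1 + c * r.a < r.a + c * r.d := by
  set s := sInf {s : ℕ | r.a ≤ s ∧ sched s = r.page} with hsdef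
  have hpos : (0:ℝ) < (r.d : ℝ) - (r.a : ℝ) := by
    have : (r.a : ℝ) < (r.d : ℝ) := by exact_mod_cast had
    linarith
  rw [bDelay, div_lt_iff₀ hpos] at hd
  have : ((s + 1 + c * r.a : ℕ) : ℝ) < ((r.a + c * r.d : ℕ) : ℝ) := by
    push_cast
    nlinarith [hd]
  exact_mod_cast this

/-- every deterministic 1-speed online broadcast algorithm for `n`
unit-sized pages has competitive ratio at least `n/4` for maximum delay factor:
for each online algorithm `B` and each `n` divisible by 4 there is a request
sequence over pages `< n` with all deadlines after arrivals, for which some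
offline schedule satisfies every request with delay factor at most 2, while `B`
either leaves some request unsatisfied or incurs delay factor at least `n/4`. -/
theorem stmt_9 (B : List BReq → ℕ → ℕ) (hB : BOnline B)
    (n : ℕ) (hn : 0 < n) (hn4 : n % 4 = 0) :
    ∃ σ : List BReq,
      (∀ r ∈ σ, r.page < n ∧ r.a < r.d) ∧
      (∃ opt : ℕ → ℕ, ∀ r ∈ σ, BSatisfied opt r ∧ bDelay opt r ≤ 2) ∧
      ((∃ r ∈ σ, ¬ BSatisfied (B σ) r) ∨
        (∃ r ∈ σ, bDelay (B σ) r ≥ (n : ℝ) / 4)) := by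
  classical
  set m := n / 4 with hmdef
  have hm1 : 1 ≤ m := by omega
  have hnm : n = 4 * m := by omega
  set g : ℕ → ℕ := gB B m with hgdef
  set σ : List BReq := mkσ m g with hσdef
  have hgt : ∀ t, B σ t = g t := by
    intro t; rw [hσdef, hgdef]; exact gB_eq B hB m t
  -- facts about last occurrences
  set lst : ℕ → ℕ := fun p => Nat.findGreatest (fun s => g s = p) (m-1) with hlstdef
  have hlst_le : ∀ p : ℕ, lst p ≤ m - 1 := by
    intro p; simp only [hlstdef]; exact Nat.findGreatest_le _
  have hlst_spec : ∀ p : ℕ, (∃ s, s < m ∧ g s = p) → g (lst p) = p := by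
    rintro p ⟨s, hs, hgs⟩
    simp only [hlstdef]
    exact Nat.findGreatest_spec (P := fun u => g u = p) (m := s) (by omega) hgs
  have hlst_ge : ∀ p s, s < m → g s = p → s ≤ lst p := by
    intro p s hs hgs
    simp only [hlstdef]
    exact Nat.le_findGreatest (P := fun u => g u = p) (by omega) hgs
  have hlst_greatest : ∀ p s, lst p < s → s < m → g s ≠ p := by
    intro p s h1 h2
    simp only [hlstdef] at h1
    exact Nat.findGreatest_is_greatest (P := fun u => g u = p) h1 (by omega)
  refine ⟨σ, ?_, ?_, ?_⟩
  · -- validity of requests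
    intro r hr
    rw [hσdef] at hr
    rcases mem_mkσ_elim m g r hr with ⟨p, hp, rfl⟩ | ⟨s, hs, rfl⟩ | ⟨i, hi, rfl⟩
    · exact ⟨show p < n by omega, show 0 < 2*m by omega⟩
    · refine ⟨?_, show s+1 < 2*m by omega⟩
      show pad m (g s) < n
      unfold pad; split <;> omega
    · refine ⟨?_, show 2*m+1+i < 2*m+2+i by omega⟩
      show 2*m + i % (2*m) < n
      have := Nat.mod_lt i (y := 2*m) (by omega)
      omega
  · -- offline schedule
    set Pfil : Finset ℕ := (Finset.range (2*m)).filter (fun p => ∃ s, s < m ∧ g s = p)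
      with hPfildef
    set Used : Finset ℕ := insert m (Pfil.image (fun p => m + 1 + lst p)) with hUseddef
    set V : Finset ℕ := (Finset.range (2*m+1)) \ Used with hVdef
    set A : Finset ℕ := (Finset.range (2*m)).filter
      (fun p => ¬ (∃ s, s < m ∧ g s = p) ∧ p ≠ 0) with hAdef
    have hUsed_sub : Used ⊆ Finset.range (2*m+1) := by
      intro x hx
      rw [hUseddef] at hx
      rcases Finset.mem_insert.mp hx with rfl | hx
      · exact Finset.mem_range.mpr (by omega)
      · obtain ⟨p, _, rfl⟩ := Finset.mem_image.mp hx
        have := hlst_le p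
        exact Finset.mem_range.mpr (by omega)
    have hcardAV : A.card ≤ V.card := by
      have h1 : A.card + ((Finset.range (2*m)).filter
          (fun p => ¬ (¬ (∃ s, s < m ∧ g s = p) ∧ p ≠ 0))).card = 2*m := by
        rw [hAdef, Finset.card_filter_add_card_filter_not, Finset.card_range]
      have h2 : Pfil ⊆ (Finset.range (2*m)).filter
          (fun p => ¬ (¬ (∃ s, s < m ∧ g s = p) ∧ p ≠ 0)) := by
        intro p hp
        rw [hPfildef] at hp
        rw [Finset.mem_filter] at hp ⊢
        exact ⟨hp.1, fun hcontra => hcontra.1 hp.2⟩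
      have h3 := Finset.card_le_card h2
      have h4 : V.card = 2*m+1 - Used.card := by
        rw [hVdef, Finset.card_sdiff_of_subset hUsed_sub, Finset.card_range]
      have h5 : Used.card ≤ Pfil.card + 1 := by
        calc Used.card ≤ (Pfil.image (fun p => m + 1 + lst p)).card + 1 :=
              by rw [hUseddef]; exact Finset.card_insert_le _ _
          _ ≤ Pfil.card + 1 := by
              have := Finset.card_image_le (s := Pfil) (f := fun p => m+1+lst p); omega
      omega
    obtain ⟨V', hV'V, hV'card⟩ := Finset.exists_subset_card_eq hcardAV
    set e : (A : Finset ℕ) ≃ (V' : Finset ℕ) := Finset.equivOfCardEq (hV'card.symm) with hedef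
    set F : ℕ → ℕ := fun p =>
      if (∃ s, s < m ∧ g s = p) then m + 1 + lst p
      else if p = 0 then m
      else if hA' : p ∈ A then ((e ⟨p, hA'⟩ : V') : ℕ) else 0 with hFdef
    have hFV : ∀ (p : ℕ) (h : p ∈ A), ((e ⟨p, h⟩ : V') : ℕ) ∈ V := by
      intro p h
      exact hV'V (e ⟨p, h⟩).2
    have hF_notUsed : ∀ (p : ℕ) (h : p ∈ A), ((e ⟨p, h⟩ : V') : ℕ) ∉ Used := by
      intro p h
      have := hFV p h
      rw [hVdef] at this
      exact (Finset.mem_sdiff.mp this).2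
    have hmemA : ∀ p, p < 2*m → ¬ (∃ s, s < m ∧ g s = p) → p ≠ 0 → p ∈ A := by
      intro p h1 h2 h3
      rw [hAdef, Finset.mem_filter]
      exact ⟨Finset.mem_range.mpr h1, h2, h3⟩
    have hF_le : ∀ p, p < 2*m → F p ≤ 2*m := by
      intro p hp
      rw [hFdef]
      dsimp only
      split_ifs with h1 h2 h3
      · have := hlst_le p; omega
      · omega
      · have := hFV p h3
        rw [hVdef] at this
        have := Finset.mem_range.mp (Finset.mem_sdiff.mp this).1
        omega
      · omega
    have hinUsed : ∀ p, p < 2*m → (∃ s, s < m ∧ g s = p) → m + 1 + lst p ∈ Used := by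
      intro p hp ht
      rw [hUseddef]
      apply Finset.mem_insert_of_mem
      exact Finset.mem_image.mpr ⟨p, by
        rw [hPfildef, Finset.mem_filter]; exact ⟨Finset.mem_range.mpr hp, ht⟩, rfl⟩
    have hF_inj : ∀ p, p < 2*m → ∀ q, q < 2*m → F p = F q → p = q := by
      intro p hp q hq hpq
      rw [hFdef] at hpq
      dsimp only at hpq
      by_cases h1 : (∃ s, s < m ∧ g s = p) <;> by_cases h2 : (∃ s, s < m ∧ g s = q)
      · rw [if_pos h1, if_pos h2] at hpq
        have e1 := hlst_spec p h1
        have e2 := hlst_spec q h2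
        have hl : lst p = lst q := by omega
        rw [← e1, ← e2]
        show g (lst p) = g (lst q)
        rw [hl]
      · rw [if_pos h1, if_neg h2] at hpq
        by_cases h3 : q = 0
        · rw [if_pos h3] at hpq
          exfalso; have := hlst_le p; omega
        · have hqA := hmemA q hq h2 h3
          rw [if_neg h3, dif_pos hqA] at hpq
          exfalso
          exact hF_notUsed q hqA (hpq ▸ hinUsed p hp h1)
      · rw [if_neg h1, if_pos h2] at hpq
        by_cases h3 : p = 0
        · rw [if_pos h3] at hpq
          exfalso; have := hlst_le q; omega
        · have hpA := hmemA p hp h1 h3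
          rw [if_neg h3, dif_pos hpA] at hpq
          exfalso
          exact hF_notUsed p hpA (hpq.symm ▸ hinUsed q hq h2)
      · rw [if_neg h1, if_neg h2] at hpq
        by_cases h3 : p = 0 <;> by_cases h4 : q = 0
        · rw [h3, h4]
        · have hqA := hmemA q hq h2 h4
          rw [if_pos h3, if_neg h4, dif_pos hqA] at hpq
          exfalso
          apply hF_notUsed q hqA
          rw [← hpq, hUseddef]
          exact Finset.mem_insert_self _ _
        · have hpA := hmemA p hp h1 h3
          rw [if_neg h3, if_pos h4, dif_pos hpA] at hpq
          exfalso
          apply hF_notUsed p hpA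
          rw [hpq, hUseddef]
          exact Finset.mem_insert_self _ _
        · have hpA := hmemA p hp h1 h3
          have hqA := hmemA q hq h2 h4
          rw [if_neg h3, if_neg h4, dif_pos hpA, dif_pos hqA] at hpq
          have : e ⟨p, hpA⟩ = e ⟨q, hqA⟩ := Subtype.ext hpq
          have := e.injective this
          exact congrArg Subtype.val this
    have hF_ge_trans : ∀ s, s < m → g s < 2*m → s + 1 ≤ F (g s) := by
      intro s hs hgs
      have ht : (∃ u, u < m ∧ g u = g s) := ⟨s, hs, rfl⟩
      rw [hFdef]
      dsimp only
      rw [if_pos ht]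
      have := hlst_ge (g s) s hs rfl
      omega
    have hF0_ge : m ≤ F 0 := by
      by_cases ht : (∃ s, s < m ∧ g s = 0)
      · have h : F 0 = m + 1 + lst 0 := by simp only [hFdef]; rw [if_pos ht]
        omega
      · have h : F 0 = m := by simp only [hFdef]; rw [if_neg ht]; simp
        omega
    set opt : ℕ → ℕ := fun s =>
      if s ≤ 2*m then (if h : ∃ p, p < 2*m ∧ F p = s then h.choose else 0)
      else 2*m + ((s - (2*m+1)) % (2*m)) with hoptdef
    have hopt_F : ∀ p, p < 2*m → opt (F p) = p := by
      intro p hp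
      have hex : ∃ q, q < 2*m ∧ F q = F p := ⟨p, hp, rfl⟩
      rw [hoptdef]
      dsimp only
      rw [if_pos (hF_le p hp), dif_pos hex]
      obtain ⟨h1, h2⟩ := hex.choose_spec
      exact hF_inj _ h1 _ hp h2
    have hopt_tight : ∀ i : ℕ, opt (2*m+1+i) = 2*m + i % (2*m) := by
      intro i
      rw [hoptdef]
      dsimp only
      rw [if_neg (by omega)]
      have h : 2*m+1+i - (2*m+1) = i := by omega
      rw [h]
    refine ⟨opt, ?_⟩
    intro r hr
    rw [hσdef] at hr
    rcases mem_mkσ_elim m g r hr with ⟨p, hp, rfl⟩ | ⟨s, hs, rfl⟩ | ⟨i, hi, rfl⟩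
    · exact bDelay_le_two opt _ (show (0:ℕ) < 2*m by omega) (F p) (Nat.zero_le _)
        (hopt_F p hp) (by have := hF_le p hp; show F p + 1 ≤ 0 + 2*(2*m - 0); omega)
    · have hq : pad m (g s) < 2*m := by unfold pad; split <;> omega
      have hqF_ge : s + 1 ≤ F (pad m (g s)) := by
        unfold pad; split
        · exact hF_ge_trans s hs ‹_›
        · omega
      exact bDelay_le_two opt _ (show s+1 < 2*m by omega) (F (pad m (g s))) hqF_ge
        (hopt_F _ hq)
        (by have := hF_le _ hq; show F (pad m (g s)) + 1 ≤ (s+1) + 2*(2*m - (s+1)); omega)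
    · exact bDelay_le_two opt _ (show 2*m+1+i < 2*m+2+i by omega) (2*m+1+i) le_rfl
        (hopt_tight i)
        (by show 2*m+1+i+1 ≤ (2*m+1+i) + 2*((2*m+2+i) - (2*m+1+i)); omega)
  · -- lower bound for the online algorithm
    by_contra hcon
    push_neg at hcon
    obtain ⟨hsat, hdel⟩ := hcon
    have hc4 : ((n:ℝ)/4) = ((m:ℕ):ℝ) := by rw [hnm]; push_cast; ring
    simp only [hc4] at hdel
    obtain ⟨MM, hMM⟩ : ∃ x : ℕ, m * m = x := ⟨_, rfl⟩
    have e1 : 2*m*m = 2*MM := by rw [← hMM]; ring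
    have hsq1 : m ≤ MM := by rw [← hMM]; exact Nat.le_mul_of_pos_left m (by omega)
    have hsq2 : m = 1 ∨ 2*m ≤ MM := by
      rcases Nat.lt_or_ge m 2 with h | h
      · left; omega
      · right; rw [← hMM]; exact Nat.mul_le_mul_right m h
    set aF : ℕ → ℕ := fun p =>
      if (∃ s, s < m ∧ g s = p) then lst p + 1 else 0
      with haFdef
    have haF_le : ∀ p, aF p ≤ m := by
      intro p
      simp only [haFdef]
      split
      · have := hlst_le p; omega
      · omega
    have hreq : ∀ p, p < 2*m → (⟨p, aF p, 2*m⟩ : BReq) ∈ σ := by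
      intro p hp
      by_cases ht : (∃ s, s < m ∧ g s = p)
      · have h1 : pad m (g (lst p)) = p := by
          rw [hlst_spec p ht]; unfold pad; rw [if_pos hp]
        have h2 : aF p = lst p + 1 := by
          simp only [haFdef]; rw [if_pos ht]
        have hmem := mem_rereq m g (lst p) (by have := hlst_le p; omega)
        rw [h1, ← h2] at hmem
        rw [hσdef]
        exact hmem
      · have h2 : aF p = 0 := by simp only [haFdef]; rw [if_neg ht]
        rw [h2, hσdef]
        exact mem_orig m g p hp
    have hwin : ∀ p, p < 2*m → ∀ s, aF p ≤ s → s < m → g s ≠ p := by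
      intro p hp s h1 h2
      by_cases ht : (∃ u, u < m ∧ g u = p)
      · apply hlst_greatest p s ?_ h2
        simp only [haFdef] at h1; rw [if_pos ht] at h1
        omega
      · intro hgs; exact ht ⟨s, h2, hgs⟩
    -- old page facts
    have hold : ∀ p, p < 2*m →
        B σ (sInf {s : ℕ | aF p ≤ s ∧ B σ s = p}) = p ∧
        m ≤ sInf {s : ℕ | aF p ≤ s ∧ B σ s = p} ∧
        sInf {s : ℕ | aF p ≤ s ∧ B σ s = p} ≤ 2*MM - 2 := by
      intro p hp
      have hmem := hreq p hp
      have hsr := hsat _ hmem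
      have hfacts : aF p ≤ sInf {s : ℕ | aF p ≤ s ∧ B σ s = p} ∧
          B σ (sInf {s : ℕ | aF p ≤ s ∧ B σ s = p}) = p :=
        bDelay_first_facts (B σ) ⟨p, aF p, 2*m⟩ hsr
      have hlt : sInf {s : ℕ | aF p ≤ s ∧ B σ s = p} + 1 + m * aF p < aF p + m * (2*m) :=
        bDelay_lt_nat (B σ) ⟨p, aF p, 2*m⟩ m
          (show aF p < 2*m by have := haF_le p; omega) (hdel _ hmem)
      have hge : m ≤ sInf {s : ℕ | aF p ≤ s ∧ B σ s = p} := by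
        by_contra hlt'
        push_neg at hlt'
        exact hwin p hp _ hfacts.1 hlt' ((hgt _).symm.trans hfacts.2)
      refine ⟨hfacts.2, hge, ?_⟩
      have e2 : m * (2*m) = 2*MM := by rw [← hMM]; ring
      rw [e2] at hlt
      have h2 : aF p ≤ m * aF p := Nat.le_mul_of_pos_left _ (by omega)
      have := haF_le p
      obtain ⟨X, hX⟩ : ∃ x : ℕ, m * aF p = x := ⟨_, rfl⟩
      rw [hX] at hlt h2
      omega
    -- tight request facts
    have htight : ∀ i, i < 2*m*m →
        B σ (sInf {s : ℕ | 2*m+1+i ≤ s ∧ B σ s = 2*m + i % (2*m)}) = 2*m + i % (2*m) ∧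
        2*m+1+i ≤ sInf {s : ℕ | 2*m+1+i ≤ s ∧ B σ s = 2*m + i % (2*m)} ∧
        sInf {s : ℕ | 2*m+1+i ≤ s ∧ B σ s = 2*m + i % (2*m)} + 1 < (2*m+1+i) + m := by
      intro i hi
      have hmem : (⟨2*m + i % (2*m), 2*m+1+i, 2*m+2+i⟩ : BReq) ∈ σ := by
        rw [hσdef]; exact mem_tight m g i hi
      have hfacts : 2*m+1+i ≤ sInf {s : ℕ | 2*m+1+i ≤ s ∧ B σ s = 2*m + i % (2*m)} ∧
          B σ (sInf {s : ℕ | 2*m+1+i ≤ s ∧ B σ s = 2*m + i % (2*m)}) = 2*m + i % (2*m) :=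
        bDelay_first_facts (B σ) ⟨2*m + i % (2*m), 2*m+1+i, 2*m+2+i⟩ (hsat _ hmem)
      have hlt : sInf {s : ℕ | 2*m+1+i ≤ s ∧ B σ s = 2*m + i % (2*m)} + 1 + m * (2*m+1+i)
          < (2*m+1+i) + m * (2*m+2+i) :=
        bDelay_lt_nat (B σ) ⟨2*m + i % (2*m), 2*m+1+i, 2*m+2+i⟩ m
          (show 2*m+1+i < 2*m+2+i by omega) (hdel _ hmem)
      refine ⟨hfacts.2, hfacts.1, ?_⟩
      have e3 : m * (2*m+2+i) = m * (2*m+1+i) + m := by ring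
      rw [e3] at hlt
      obtain ⟨X, hX⟩ : ∃ x : ℕ, m * (2*m+1+i) = x := ⟨_, rfl⟩
      rw [hX] at hlt
      omega
    -- the packing contradiction
    set f : ℕ → ℕ := fun k =>
      if k < 2*m then sInf {s : ℕ | aF k ≤ s ∧ B σ s = k}
      else sInf {s : ℕ | 2*m+1+(k-2*m) ≤ s ∧ B σ s = 2*m + (k-2*m) % (2*m)} with hfdef
    have hmaps : ∀ k ∈ Finset.range (2*m + (2*m*m - 3*m)), f k ∈ Finset.Icc m (2*MM - 2) := by
      intro k hk
      have hk' := Finset.mem_range.mp hk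
      rw [e1] at hk'
      rw [hfdef]
      dsimp only
      split_ifs with h
      · obtain ⟨_, h2, h3⟩ := hold k h
        exact Finset.mem_Icc.mpr ⟨h2, h3⟩
      · have hik : k - 2*m < 2*m*m := by rw [e1]; omega
        obtain ⟨_, h2, h3⟩ := htight (k - 2*m) hik
        refine Finset.mem_Icc.mpr ⟨by omega, by omega⟩
    have hinj : Set.InjOn f (Finset.range (2*m + (2*m*m - 3*m))) := by
      have main : ∀ i j, i ≤ j → i < 2*m*m → j < 2*m*m →
          sInf {s : ℕ | 2*m+1+i ≤ s ∧ B σ s = 2*m + i % (2*m)} =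
          sInf {s : ℕ | 2*m+1+j ≤ s ∧ B σ s = 2*m + j % (2*m)} →
          sInf {s : ℕ | 2*m+1+j ≤ s ∧ B σ s = 2*m + j % (2*m)} + 1 < (2*m+1+i) + m →
          i = j := by
        intro i j hij hi hj heq hbd
        obtain ⟨hbi, _, _⟩ := htight i hi
        obtain ⟨hbj, hgej, _⟩ := htight j hj
        rw [heq] at hbi
        rw [hbj] at hbi
        have himod : i % (2*m) = j % (2*m) := (Nat.add_left_cancel hbi).symm
        have hdvd : (2*m) ∣ (j - i) := (Nat.modEq_iff_dvd' hij).mp himod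
        have hlt2 : j - i < 2*m := by omega
        have := Nat.eq_zero_of_dvd_of_lt hdvd hlt2
        omega
      intro k₁ hk₁ k₂ hk₂ hfk
      have hk₁' := Finset.mem_range.mp (Finset.mem_coe.mp hk₁)
      have hk₂' := Finset.mem_range.mp (Finset.mem_coe.mp hk₂)
      rw [e1] at hk₁' hk₂'
      rw [hfdef] at hfk
      dsimp only at hfk
      by_cases h1 : k₁ < 2*m <;> by_cases h2 : k₂ < 2*m
      · rw [if_pos h1, if_pos h2] at hfk
        have e1' := (hold k₁ h1).1
        have e2' := (hold k₂ h2).1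
        rw [hfk, e2'] at e1'
        exact e1'.symm
      · rw [if_pos h1, if_neg h2] at hfk
        exfalso
        have hik : k₂ - 2*m < 2*m*m := by rw [e1]; omega
        have e2' := (htight (k₂ - 2*m) hik).1
        have e1' := (hold k₁ h1).1
        rw [hfk] at e1'
        rw [e2'] at e1'
        omega
      · rw [if_neg h1, if_pos h2] at hfk
        exfalso
        have hik : k₁ - 2*m < 2*m*m := by rw [e1]; omega
        have e2' := (htight (k₁ - 2*m) hik).1
        have e1' := (hold k₂ h2).1
        rw [← hfk] at e1'
        rw [e2'] at e1'
        omega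
      · rw [if_neg h1, if_neg h2] at hfk
        have hik₁ : k₁ - 2*m < 2*m*m := by rw [e1]; omega
        have hik₂ : k₂ - 2*m < 2*m*m := by rw [e1]; omega
        rcases le_total (k₁ - 2*m) (k₂ - 2*m) with hle | hle
        · have hbd : sInf {s : ℕ | 2*m+1+(k₂-2*m) ≤ s ∧ B σ s = 2*m + (k₂-2*m) % (2*m)} + 1
              < (2*m+1+(k₁-2*m)) + m := by
            have := (htight (k₁ - 2*m) hik₁).2.2
            rw [hfk] at this
            exact this
          have := main (k₁ - 2*m) (k₂ - 2*m) hle hik₁ hik₂ hfk hbd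
          omega
        · have hbd : sInf {s : ℕ | 2*m+1+(k₁-2*m) ≤ s ∧ B σ s = 2*m + (k₁-2*m) % (2*m)} + 1
              < (2*m+1+(k₂-2*m)) + m := by
            have := (htight (k₂ - 2*m) hik₂).2.2
            rw [← hfk] at this
            exact this
          have := main (k₂ - 2*m) (k₁ - 2*m) hle hik₂ hik₁ hfk.symm hbd
          omega
    have hcard := Finset.card_le_card_of_injOn f hmaps hinj
    rw [Finset.card_range, Nat.card_Icc] at hcard
    rw [e1] at hcard
    omega
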